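/- Suppose ν > d. Then there exists a constant C > 0, depending only on d and ν, such that for every integer T ≥ 2 and every sequence of points z_1, …, z_T ∈ 𝔹, V_ν(z_1,…,z_T) ≤ C. -/
import Mathlib


open Metric

/-- Dyadic localization: any `m ∈ (0,1]` lies in some interval `((1/2)^(k+1), (1/2)^k]`. -/
lemma exists_dyadic {m : ℝ} (h0 : 0 < m) (h1 : m ≤ 1) :
    ∃ k : ℕ, (1/2 : ℝ) ^ (k + 1) < m ∧ m ≤ (1/2 : ℝ) ^ k := by
  classical
  obtain ⟨n, hn⟩ := exists_pow_lt_of_lt_one h0 (by norm_num : (1/2 : ℝ) < 1)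
  have hP : ∃ n, (1/2 : ℝ) ^ n < m := ⟨n, hn⟩
  have hn0 : (1/2 : ℝ) ^ (Nat.find hP) < m := Nat.find_spec hP
  have hpos : Nat.find hP ≠ 0 := by
    intro h
    rw [h, pow_zero] at hn0
    linarith
  refine ⟨Nat.find hP - 1, ?_, ?_⟩
  · have he : Nat.find hP - 1 + 1 = Nat.find hP := by omega
    rwa [he]
  · exact le_of_not_gt (Nat.find_min hP (by omega))

/-- Volume packing bound: an `ε`-separated finite family inside the ball of radius `1/2`
has cardinality at most `(3/ε)^d`. -/
lemma packing_bound (d : ℕ) {ε : ℝ} (hε : 0 < ε) (hε1 : ε ≤ 1)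
    (s : Finset ℕ) (f : ℕ → EuclideanSpace ℝ (Fin d))
    (hf : ∀ i ∈ s, f i ∈ closedBall (0 : EuclideanSpace ℝ (Fin d)) (1/2))
    (hsep : ∀ i ∈ s, ∀ j ∈ s, i ≠ j → ε ≤ ‖f i - f j‖) :
    (s.card : ℝ) ≤ (3 / ε) ^ d := by
  have hB0 : 0 < MeasureTheory.volume (closedBall (0 : EuclideanSpace ℝ (Fin d)) 1) :=
    measure_closedBall_pos _ _ one_pos
  have hBt : MeasureTheory.volume (closedBall (0 : EuclideanSpace ℝ (Fin d)) 1) < ⊤ :=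
    MeasureTheory.measure_closedBall_lt_top
  have hdisj : (↑s : Set ℕ).PairwiseDisjoint (fun i => closedBall (f i) (ε/3)) := by
    intro i hi j hj hij
    apply closedBall_disjoint_closedBall
    have h := hsep i hi j hj hij
    rw [dist_eq_norm]
    linarith
  have hsub : (⋃ i ∈ s, closedBall (f i) (ε/3)) ⊆ closedBall 0 1 := by
    intro x hx
    simp only [Set.mem_iUnion] at hx
    obtain ⟨i, hi, hx⟩ := hx
    have h1 := hf i hi
    rw [mem_closedBall] at *
    calc dist x 0 ≤ dist x (f i) + dist (f i) 0 := dist_triangle _ _ _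
      _ ≤ ε/3 + 1/2 := add_le_add hx h1
      _ ≤ 1 := by linarith
  have hball : ∀ i ∈ s, MeasureTheory.volume (closedBall (f i) (ε/3))
      = ENNReal.ofReal ((ε/3) ^ d)
        * MeasureTheory.volume (closedBall (0 : EuclideanSpace ℝ (Fin d)) 1) := by
    intro i _
    rw [MeasureTheory.Measure.addHaar_closedBall'
      (MeasureTheory.volume : MeasureTheory.Measure (EuclideanSpace ℝ (Fin d)))
      (f i) (by positivity : (0:ℝ) ≤ ε/3)]
    rw [finrank_euclideanSpace_fin (𝕜 := ℝ) (n := d)]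
  have key : (s.card : ENNReal) * ENNReal.ofReal ((ε/3) ^ d)
        * MeasureTheory.volume (closedBall (0 : EuclideanSpace ℝ (Fin d)) 1)
      ≤ 1 * MeasureTheory.volume (closedBall (0 : EuclideanSpace ℝ (Fin d)) 1) := by
    rw [one_mul]
    calc (s.card : ENNReal) * ENNReal.ofReal ((ε/3) ^ d)
          * MeasureTheory.volume (closedBall (0 : EuclideanSpace ℝ (Fin d)) 1)
        = ∑ i ∈ s, MeasureTheory.volume (closedBall (f i) (ε/3)) := by
          rw [Finset.sum_congr rfl hball, Finset.sum_const, nsmul_eq_mul, mul_assoc]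
      _ = MeasureTheory.volume (⋃ i ∈ s, closedBall (f i) (ε/3)) :=
          (MeasureTheory.measure_biUnion_finset hdisj fun i _ => measurableSet_closedBall).symm
      _ ≤ MeasureTheory.volume (closedBall (0 : EuclideanSpace ℝ (Fin d)) 1) :=
          MeasureTheory.measure_mono hsub
  have h2 : (s.card : ENNReal) * ENNReal.ofReal ((ε/3) ^ d) ≤ 1 :=
    (ENNReal.mul_le_mul_iff_left hB0.ne' hBt.ne).mp key
  have h3 : (s.card : ℝ) * (ε/3) ^ d ≤ 1 := by
    rw [← ENNReal.ofReal_le_one, ENNReal.ofReal_mul (by positivity), ENNReal.ofReal_natCast]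
    exact h2
  have hεd : (0:ℝ) < (ε/3) ^ d := by positivity
  have := (le_div_iff₀ hεd).mpr h3
  calc (s.card : ℝ) ≤ 1 / (ε/3) ^ d := by rwa [le_div_iff₀ hεd]
    _ = (3 / ε) ^ d := by
        rw [one_div, ← inv_pow, inv_div]

/-- `V d ν T z = Σ_{t=2}^T (min_{1 ≤ i < t} ‖z t - z i‖) ^ ν`, where `^` is the real power. -/
noncomputable def V (d : ℕ) (ν : ℝ) (T : ℕ) (z : ℕ → EuclideanSpace ℝ (Fin d)) : ℝ :=
  ∑ t ∈ Finset.Icc 2 T, (sInf ((fun i => ‖z t - z i‖) '' Set.Ico 1 t)) ^ ν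

/-- **Case `d < ν` of Lemma 4.** If `ν > d`, there is a constant `C > 0` depending only on
`d` and `ν` such that for every `T ≥ 2` and points `z_1, …, z_T` in the ball of
diameter 1, `V_ν(z_1,…,z_T) ≤ C`. -/
theorem V_le_of_d_lt_nu
    (d : ℕ) (hd : 0 < d) (ν : ℝ) (hν : (d : ℝ) < ν) :
    ∃ C : ℝ, 0 < C ∧ ∀ T : ℕ, 2 ≤ T → ∀ z : ℕ → EuclideanSpace ℝ (Fin d),
      (∀ i, 1 ≤ i → i ≤ T →
        z i ∈ closedBall (0 : EuclideanSpace ℝ (Fin d)) (1 / 2)) →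
      V d ν T z ≤ C := by
  classical
  have hν0 : (0:ℝ) < ν := lt_of_le_of_lt (by exact_mod_cast Nat.zero_le d) hν
  set r : ℝ := (2:ℝ) ^ ((d:ℝ) - ν) with hrdef
  have hr0 : 0 ≤ r := Real.rpow_nonneg (by norm_num) _
  have hr1 : r < 1 := Real.rpow_lt_one_of_one_lt_of_neg (by norm_num) (by linarith)
  have h1r : 0 < 1 - r := by linarith
  refine ⟨(6:ℝ) ^ d * (1 - r)⁻¹ + 1, ?_, ?_⟩
  · have : (0:ℝ) < (6:ℝ) ^ d * (1 - r)⁻¹ := by positivity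
    linarith
  intro T hT z hz
  -- the minimal distances
  set m : ℕ → ℝ := fun t => sInf ((fun i => ‖z t - z i‖) '' Set.Ico 1 t) with hm
  have hbdd : ∀ t, BddBelow ((fun i => ‖z t - z i‖) '' Set.Ico 1 t) := by
    intro t
    refine ⟨0, ?_⟩
    rintro x ⟨i, _, rfl⟩
    exact norm_nonneg _
  have hm0 : ∀ t, 0 ≤ m t := by
    intro t
    apply Real.sInf_nonneg
    rintro x ⟨i, _, rfl⟩
    exact norm_nonneg _
  have hmle : ∀ t, ∀ i, 1 ≤ i → i < t → m t ≤ ‖z t - z i‖ := by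
    intro t i h1 h2
    exact csInf_le (hbdd t) ⟨i, ⟨h1, h2⟩, rfl⟩
  have hm1 : ∀ t ∈ Finset.Icc 2 T, m t ≤ 1 := by
    intro t ht
    rw [Finset.mem_Icc] at ht
    have h := hmle t 1 le_rfl (by omega)
    have hz1 : ‖z 1‖ ≤ 1/2 := by
      have := hz 1 le_rfl (by omega); rwa [mem_closedBall_zero_iff] at this
    have hzt : ‖z t‖ ≤ 1/2 := by
      have := hz t (by omega) ht.2; rwa [mem_closedBall_zero_iff] at this
    have := norm_sub_le (z t) (z 1)
    linarith
  set S : Finset ℕ := (Finset.Icc 2 T).filter (fun t => m t ≠ 0) with hS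
  have hVS : V d ν T z = ∑ t ∈ S, m t ^ ν := by
    rw [V, hS]
    rw [Finset.sum_filter_of_ne]
    intro t _ h
    intro h0
    apply h
    rw [h0, Real.zero_rpow hν0.ne']
  -- dyadic index
  have hSmem : ∀ t ∈ S, 0 < m t ∧ m t ≤ 1 := by
    intro t ht
    rw [hS, Finset.mem_filter] at ht
    exact ⟨lt_of_le_of_ne (hm0 t) (Ne.symm ht.2), hm1 t ht.1⟩
  set kf : ℕ → ℕ := fun t =>
    if h : 0 < m t ∧ m t ≤ 1 then (exists_dyadic h.1 h.2).choose else 0 with hkf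
  have hkf_spec : ∀ t ∈ S, (1/2:ℝ) ^ (kf t + 1) < m t ∧ m t ≤ (1/2:ℝ) ^ (kf t) := by
    intro t ht
    have h := hSmem t ht
    rw [hkf]
    simp only [dif_pos h]
    exact (exists_dyadic h.1 h.2).choose_spec
  -- pointwise bound
  have step1 : ∑ t ∈ S, m t ^ ν ≤ ∑ t ∈ S, ((1/2:ℝ) ^ (kf t)) ^ ν := by
    apply Finset.sum_le_sum
    intro t ht
    exact Real.rpow_le_rpow (hm0 t) (hkf_spec t ht).2 hν0.le
  -- group by fibers
  set g : ℕ → ℝ := fun k => ((1/2:ℝ) ^ k) ^ ν with hg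
  have hg0 : ∀ k, 0 ≤ g k := fun k => Real.rpow_nonneg (by positivity) _
  have step2 : ∑ t ∈ S, g (kf t)
      = ∑ k ∈ S.image kf, (S.filter (fun t => kf t = k)).card • g k :=
    Finset.sum_comp g kf
  -- fiber cardinality bound
  have hcard : ∀ k, ((S.filter (fun t => kf t = k)).card : ℝ) ≤ (6:ℝ) ^ d * (2:ℝ) ^ (k * d) := by
    intro k
    set F := S.filter (fun t => kf t = k) with hF
    have hFS : ∀ t ∈ F, t ∈ S := fun t ht => (Finset.mem_filter.mp ht).1
    have hFIcc : ∀ t ∈ F, 2 ≤ t ∧ t ≤ T := by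
      intro t ht
      have := (Finset.mem_filter.mp (hFS t ht)).1
      rwa [Finset.mem_Icc] at this
    have hsep : ∀ i ∈ F, ∀ j ∈ F, i ≠ j → (1/2:ℝ) ^ (k+1) ≤ ‖z i - z j‖ := by
      have key : ∀ i ∈ F, ∀ j ∈ F, i < j → (1/2:ℝ) ^ (k+1) ≤ ‖z j - z i‖ := by
        intro i hi j hj hij
        have h1 := hkf_spec j (hFS j hj)
        have hkj : kf j = k := (Finset.mem_filter.mp hj).2
        have h2 : m j ≤ ‖z j - z i‖ :=
          hmle j i (by have := (hFIcc i hi).1; omega) hij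
        rw [hkj] at h1
        linarith [h1.1]
      intro i hi j hj hij
      rcases lt_or_gt_of_ne hij with h | h
      · rw [norm_sub_rev]; exact key i hi j hj h
      · exact key j hj i hi h
    have hball : ∀ i ∈ F, z i ∈ closedBall (0 : EuclideanSpace ℝ (Fin d)) (1/2) := by
      intro i hi
      exact hz i (by have := (hFIcc i hi).1; omega) (hFIcc i hi).2
    have hεpos : (0:ℝ) < (1/2:ℝ) ^ (k+1) := by positivity
    have hε1 : (1/2:ℝ) ^ (k+1) ≤ 1 :=
      pow_le_one₀ (by norm_num) (by norm_num)
    have := packing_bound d hεpos hε1 F z hball hsep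
    calc (F.card : ℝ) ≤ (3 / (1/2:ℝ) ^ (k+1)) ^ d := this
      _ = ((3:ℝ) * 2 ^ (k+1)) ^ d := by
          congr 1
          rw [one_div, inv_pow]
          field_simp
      _ = ((6:ℝ) * 2 ^ k) ^ d := by ring
      _ = (6:ℝ) ^ d * (2:ℝ) ^ (k * d) := by
          rw [mul_pow, ← pow_mul]
  -- base identity
  have hbase : (2:ℝ) ^ d * ((1/2:ℝ)) ^ ν = r := by
    rw [hrdef, show ((1:ℝ)/2) = (2:ℝ)⁻¹ from by norm_num,
      Real.inv_rpow (by norm_num : (0:ℝ) ≤ 2), ← Real.rpow_neg (by norm_num : (0:ℝ) ≤ 2),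
      ← Real.rpow_natCast (2:ℝ) d, ← Real.rpow_add (by norm_num : (0:ℝ) < 2), sub_eq_add_neg]
  have hgk : ∀ k : ℕ, g k = (((1/2:ℝ)) ^ ν) ^ k := by
    intro k
    show ((1/2:ℝ) ^ k) ^ ν = ((1/2:ℝ) ^ ν) ^ k
    rw [← Real.rpow_natCast (1/2:ℝ) k, ← Real.rpow_natCast ((1/2:ℝ) ^ ν) k,
      ← Real.rpow_mul (by norm_num : (0:ℝ) ≤ 1/2), ← Real.rpow_mul (by norm_num : (0:ℝ) ≤ 1/2),
      mul_comm]
  have hkey : ∀ k : ℕ, (2:ℝ) ^ (k * d) * g k = r ^ k := by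
    intro k
    rw [hgk, show k * d = d * k from mul_comm k d, pow_mul, ← mul_pow, hbase]
  -- per-fiber bound
  have hterm : ∀ k : ℕ, ((S.filter (fun t => kf t = k)).card : ℝ) * g k
      ≤ (6:ℝ) ^ d * r ^ k := by
    intro k
    calc ((S.filter (fun t => kf t = k)).card : ℝ) * g k
        ≤ ((6:ℝ) ^ d * (2:ℝ) ^ (k * d)) * g k :=
          mul_le_mul_of_nonneg_right (hcard k) (hg0 k)
      _ = (6:ℝ) ^ d * ((2:ℝ) ^ (k * d) * g k) := by ring
      _ = (6:ℝ) ^ d * r ^ k := by rw [hkey]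
  -- geometric series bound
  have hgeom : ∑ k ∈ S.image kf, r ^ k ≤ (1 - r)⁻¹ := by
    have h := Summable.sum_le_tsum (S.image kf) (fun k _ => pow_nonneg hr0 k)
      (summable_geometric_of_lt_one hr0 hr1)
    rwa [tsum_geometric_of_lt_one hr0 hr1] at h
  -- combine
  calc V d ν T z = ∑ t ∈ S, m t ^ ν := hVS
    _ ≤ ∑ t ∈ S, g (kf t) := step1
    _ = ∑ k ∈ S.image kf, (S.filter (fun t => kf t = k)).card • g k := step2
    _ ≤ ∑ k ∈ S.image kf, (6:ℝ) ^ d * r ^ k := by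
        apply Finset.sum_le_sum
        intro k _
        rw [nsmul_eq_mul]
        exact hterm k
    _ = (6:ℝ) ^ d * ∑ k ∈ S.image kf, r ^ k := by rw [Finset.mul_sum]
    _ ≤ (6:ℝ) ^ d * (1 - r)⁻¹ :=
        mul_le_mul_of_nonneg_left hgeom (by positivity)
    _ ≤ (6:ℝ) ^ d * (1 - r)⁻¹ + 1 := by linarith
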